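/- Let q > 1 be an integer and t > 0 a real number. Then t lies in ℤ[1/q] (i.e., t q^m is an integer for some m ≥ 0) if and only if the n-th digit of t in base q equals q - 1 for all sufficiently large n > 0. -/

import Mathlib

/-!
Both conditions say that the ceilings `⌈t q^n⌉` eventually multiply by exactly `q` from one index
to the next. If `t q^m ∈ ℤ` this is clear for `n > m`. Conversely, if it holds from `x = t q^(N-1)`
on, then `⌈x q^k⌉ = q^k ⌈x⌉`, so `q^k (⌈x⌉ - x) < 1` for every `k`, which forces `x = ⌈x⌉`.
-/

/-- The `n`-th digit `t^(n)` of `t` in base `q`. -/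
noncomputable def baseDigit (q : ℤ) (t : ℝ) (n : ℤ) : ℤ :=
  ⌈t * (q : ℝ) ^ n - 1⌉ - q * ⌈t * (q : ℝ) ^ (n - 1) - 1⌉

lemma baseDigit_eq_sub_one_iff (q : ℤ) (t : ℝ) (n : ℤ) :
    baseDigit q t n = q - 1 ↔ ⌈t * (q : ℝ) ^ n⌉ = q * ⌈t * (q : ℝ) ^ (n - 1)⌉ := by
  have hsub (y : ℝ) : ⌈y - 1⌉ = ⌈y⌉ - 1 := by exact_mod_cast Int.ceil_sub_intCast y 1
  rw [baseDigit, hsub, hsub]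
  constructor <;> intro h <;> linear_combination h

lemma exists_intCast_eq_mul_zpow_of_le {q : ℤ} {t : ℝ} {m : ℕ} {z : ℤ}
    (hz : t * (q : ℝ) ^ m = z) {n : ℤ} (hmn : (m : ℤ) ≤ n) : ∃ w : ℤ, t * (q : ℝ) ^ n = w := by
  obtain ⟨k, rfl⟩ := Int.le.dest hmn
  refine ⟨z * q ^ k, ?_⟩
  rw [← Nat.cast_add, zpow_natCast, pow_add, ← mul_assoc, hz]
  push_cast
  rfl

lemma ceil_mul_pow_eq_pow_mul_ceil {q : ℤ} {x : ℝ}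
    (h : ∀ k : ℕ, ⌈x * (q : ℝ) ^ (k + 1)⌉ = q * ⌈x * (q : ℝ) ^ k⌉) (k : ℕ) :
    ⌈x * (q : ℝ) ^ k⌉ = q ^ k * ⌈x⌉ := by
  induction k with
  | zero => simp
  | succ k ih => rw [h, ih, pow_succ']; ring

lemma eq_zero_of_forall_pow_mul_lt_one {a b : ℝ} (hb : 1 < b) (ha : 0 ≤ a)
    (h : ∀ k : ℕ, b ^ k * a < 1) : a = 0 := by
  by_contra hne
  have hpos : 0 < a := lt_of_le_of_ne ha (Ne.symm hne)
  obtain ⟨k, hk⟩ := pow_unbounded_of_one_lt a⁻¹ hb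
  have := h k
  rw [inv_lt_iff_one_lt_mul₀ hpos] at hk
  linarith

lemma ceil_eq_of_forall_ceil_mul_pow {q : ℤ} (hq : 1 < q) {x : ℝ}
    (h : ∀ k : ℕ, ⌈x * (q : ℝ) ^ k⌉ = q ^ k * ⌈x⌉) : (⌈x⌉ : ℝ) = x := by
  have hgap : ⌈x⌉ - x = 0 := by
    refine eq_zero_of_forall_pow_mul_lt_one (b := q) (by exact_mod_cast hq)
      (sub_nonneg.2 (Int.le_ceil x)) fun k => ?_
    have hk : ((q ^ k * ⌈x⌉ : ℤ) : ℝ) < x * (q : ℝ) ^ k + 1 := h k ▸ Int.ceil_lt_add_one _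
    push_cast at hk
    linarith
  linarith

theorem mem_zInvQ_iff_digits_eventually_general (q : ℤ) (hq : 1 < q) (t : ℝ) :
    (∃ m : ℕ, ∃ z : ℤ, t * (q : ℝ) ^ m = z) ↔
      ∃ N : ℤ, 0 < N ∧ ∀ n : ℤ, N ≤ n →
        ⌈t * (q : ℝ) ^ n - 1⌉ - q * ⌈t * (q : ℝ) ^ (n - 1) - 1⌉ = q - 1 := by
  have hq0 : (q : ℝ) ≠ 0 := by exact_mod_cast (show q ≠ 0 by omega)
  change _ ↔ ∃ N : ℤ, 0 < N ∧ ∀ n : ℤ, N ≤ n → baseDigit q t n = q - 1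
  simp only [baseDigit_eq_sub_one_iff]
  constructor
  · rintro ⟨m, z, hz⟩
    refine ⟨m + 1, by positivity, fun n hn => ?_⟩
    obtain ⟨w, hw⟩ := exists_intCast_eq_mul_zpow_of_le hz (n := n - 1) (by omega)
    have hstep : t * (q : ℝ) ^ n = ((q * w : ℤ) : ℝ) := by
      rw [← sub_add_cancel n 1, zpow_add_one₀ hq0, ← mul_assoc, hw]
      push_cast
      ring
    rw [hstep, hw, Int.ceil_intCast, Int.ceil_intCast]
  · rintro ⟨N, hN, hdig⟩
    set x := t * (q : ℝ) ^ (N - 1)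
    have hshift (j : ℕ) : t * (q : ℝ) ^ (N - 1 + j) = x * (q : ℝ) ^ j := by
      rw [zpow_add₀ hq0, zpow_natCast, mul_assoc]
    have hceil : (⌈x⌉ : ℝ) = x := by
      refine ceil_eq_of_forall_ceil_mul_pow hq (ceil_mul_pow_eq_pow_mul_ceil fun k => ?_)
      have hk := hdig (N - 1 + (k + 1 : ℕ)) (by omega)
      rwa [show N - 1 + ((k + 1 : ℕ) : ℤ) - 1 = N - 1 + k by push_cast; ring,
        hshift, hshift] at hk
    refine ⟨(N - 1).toNat, ⌈x⌉, ?_⟩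
    rw [hceil, ← zpow_natCast, Int.toNat_of_nonneg (by omega)]

/-- For an integer `q > 1` and a real `t > 0`, `t ∈ ℤ[1/q]` (i.e. `t q^m ∈ ℤ` for some
`m ≥ 0`) if and only if the `n`-th digit of `t` in base `q` equals `q - 1` for all
sufficiently large `n > 0`. -/
theorem mem_zInvQ_iff_digits_eventually (q : ℤ) (hq : 1 < q) (t : ℝ) (ht : 0 < t) :
    (∃ m : ℕ, ∃ z : ℤ, t * (q : ℝ) ^ m = z) ↔
      ∃ N : ℤ, 0 < N ∧ ∀ n : ℤ, N ≤ n →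
        ⌈t * (q : ℝ) ^ n - 1⌉ - q * ⌈t * (q : ℝ) ^ (n - 1) - 1⌉ = q - 1 :=
  mem_zInvQ_iff_digits_eventually_general q hq t
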